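/- Under the hypotheses of the previous perturbation lemma (Û = U*Σ*W + E, R² = ÛᵀÛ, U = ÛR⁻¹), if σ_min(Σ*)·σ_min(W) > κ‖E‖₂ where κ = ‖Σ*‖₂/σ_min(Σ*) is the condition number of Σ*, then ‖(I − U*(U*)ᵀ)U‖₂ ≤ κ‖E‖₂ / (σ_min(Σ*)·σ_min(W) − κ‖E‖₂). -/

import Mathlib

/-! Since `(1 - U* U*ᵀ)` annihilates `U* Σ* W`, we have `(1 - U* U*ᵀ) U = (1 - U* U*ᵀ) E R⁻¹`, whose
norm is at most `‖E‖ ‖R⁻¹‖`. As `Rᵀ R = Ûᵀ Û`, the map `R` stretches every vector exactly as `Û`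
does, and by the triangle inequality `Û = U* Σ* W + E` stretches no vector by less than
`σ_min(Σ*) σ_min(W) - ‖E‖`; this bounds `‖R⁻¹‖`. Finally `κ ≥ 1` turns
`‖E‖ / (σ_min(Σ*) σ_min(W) - ‖E‖)` into the stated bound. -/

open Matrix

/-- Spectral (operator) norm of a real matrix. -/
noncomputable def sNorm {n r : ℕ} (A : Matrix (Fin n) (Fin r) ℝ) : ℝ :=
  ‖(LinearMap.toContinuousLinearMap (Matrix.toEuclideanLin A))‖

/-- Smallest singular value of a real matrix. -/
noncomputable def sMin {n r : ℕ} (A : Matrix (Fin n) (Fin r) ℝ) : ℝ :=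
  ⨅ x : Metric.sphere (0 : EuclideanSpace ℝ (Fin r)) 1, ‖Matrix.toEuclideanLin A x‖

open scoped Matrix.Norms.L2Operator

lemma Matrix.one_sub_mul_transpose_mul_mul_eq_zero {α l m n : Type*} [Ring α] [Fintype l]
    [Fintype m] [DecidableEq l] [DecidableEq m] {Q : Matrix l m α} (hQ : Qᵀ * Q = 1)
    (A : Matrix m n α) :
    (1 - Q * Qᵀ) * (Q * A) = 0 := by
  rw [Matrix.sub_mul, Matrix.one_mul, Matrix.mul_assoc, ← Matrix.mul_assoc Qᵀ, hQ,
    Matrix.one_mul, sub_self]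

section EuclideanLin

variable {l m n : Type*} [Fintype m] [Fintype n] [DecidableEq m] [DecidableEq n]

lemma Matrix.toEuclideanLin_mul_apply (A : Matrix l m ℝ) (B : Matrix m n ℝ)
    (x : EuclideanSpace ℝ n) :
    toEuclideanLin (A * B) x = toEuclideanLin A (toEuclideanLin B x) := by
  simp

lemma Matrix.norm_toEuclideanLin_apply_sq (A : Matrix m n ℝ) (x : EuclideanSpace ℝ n) :
    ‖toEuclideanLin A x‖ ^ 2 = inner ℝ x (toEuclideanLin (Aᵀ * A) x) := by
  rw [← real_inner_self_eq_norm_sq, toEuclideanLin_mul_apply,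
    ← conjTranspose_eq_transpose_of_trivial, toEuclideanLin_conjTranspose_eq_adjoint,
    LinearMap.adjoint_inner_right]

lemma Matrix.norm_toEuclideanLin_apply_eq_of_transpose_mul_self_eq [Fintype l] [DecidableEq l]
    {A : Matrix m n ℝ} {B : Matrix l n ℝ} (h : Aᵀ * A = Bᵀ * B) (x : EuclideanSpace ℝ n) :
    ‖toEuclideanLin A x‖ = ‖toEuclideanLin B x‖ := by
  rw [← sq_eq_sq₀ (norm_nonneg _) (norm_nonneg _), norm_toEuclideanLin_apply_sq,
    norm_toEuclideanLin_apply_sq, h]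

lemma Matrix.norm_toEuclideanLin_mul_apply_of_transpose_mul_self_eq_one [Fintype l]
    [DecidableEq l] {Q : Matrix l m ℝ} (hQ : Qᵀ * Q = 1) (A : Matrix m n ℝ)
    (x : EuclideanSpace ℝ n) :
    ‖toEuclideanLin (Q * A) x‖ = ‖toEuclideanLin A x‖ :=
  norm_toEuclideanLin_apply_eq_of_transpose_mul_self_eq
    (by rw [transpose_mul, Matrix.mul_assoc, ← Matrix.mul_assoc Qᵀ, hQ, Matrix.one_mul]) x

end EuclideanLin

section SpectralNorm

variable {k m n : ℕ}

lemma sNorm_eq_l2_opNorm (A : Matrix (Fin m) (Fin n) ℝ) : sNorm A = ‖A‖ := rfl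

lemma sNorm_nonneg (A : Matrix (Fin m) (Fin n) ℝ) : 0 ≤ sNorm A :=
  norm_nonneg _

lemma norm_toEuclideanLin_apply_le_sNorm_mul (A : Matrix (Fin m) (Fin n) ℝ)
    (x : EuclideanSpace ℝ (Fin n)) : ‖toEuclideanLin A x‖ ≤ sNorm A * ‖x‖ :=
  (LinearMap.toContinuousLinearMap (toEuclideanLin A)).le_opNorm x

lemma sNorm_le_of_forall {A : Matrix (Fin m) (Fin n) ℝ} {c : ℝ} (hc : 0 ≤ c)
    (h : ∀ x, ‖toEuclideanLin A x‖ ≤ c * ‖x‖) : sNorm A ≤ c :=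
  ContinuousLinearMap.opNorm_le_bound _ hc h

lemma sNorm_mul_le (A : Matrix (Fin k) (Fin m) ℝ) (B : Matrix (Fin m) (Fin n) ℝ) :
    sNorm (A * B) ≤ sNorm A * sNorm B := by
  simpa only [sNorm_eq_l2_opNorm] using l2_opNorm_mul A B

lemma sNorm_one_sub_mul_transpose_le_one {Q : Matrix (Fin m) (Fin n) ℝ} (hQ : Qᵀ * Q = 1) :
    sNorm (1 - Q * Qᵀ) ≤ 1 := by
  have hP : IsStarProjection (Q * Qᵀ) := by
    refine ⟨?_, ?_⟩
    · rw [IsIdempotentElem, Matrix.mul_assoc, ← Matrix.mul_assoc Qᵀ, hQ, Matrix.one_mul]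
    · exact (isHermitian_mul_conjTranspose_self Q).isSelfAdjoint
  rw [sNorm_eq_l2_opNorm]
  exact hP.one_sub.norm_le

lemma sNorm_inv_le_of_forall_mul_norm_le {A : Matrix (Fin n) (Fin n) ℝ} (hA : IsUnit A.det)
    {c : ℝ} (hc : 0 < c) (h : ∀ x, c * ‖x‖ ≤ ‖toEuclideanLin A x‖) : sNorm A⁻¹ ≤ c⁻¹ := by
  refine sNorm_le_of_forall (inv_nonneg.2 hc.le) fun x => ?_
  have hx : toEuclideanLin A (toEuclideanLin A⁻¹ x) = x := by
    rw [← toEuclideanLin_mul_apply, mul_nonsing_inv A hA]; simp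
  rw [inv_mul_eq_div, le_div_iff₀' hc]
  simpa only [hx] using h (toEuclideanLin A⁻¹ x)

end SpectralNorm

section SmallestSingularValue

variable {m n : ℕ}

lemma sMin_nonneg (A : Matrix (Fin m) (Fin n) ℝ) : 0 ≤ sMin A :=
  Real.iInf_nonneg fun _ => norm_nonneg _

lemma sMin_le_norm_toEuclideanLin_apply (A : Matrix (Fin m) (Fin n) ℝ)
    {x : EuclideanSpace ℝ (Fin n)} (hx : ‖x‖ = 1) : sMin A ≤ ‖toEuclideanLin A x‖ :=
  ciInf_le ⟨0, by rintro _ ⟨y, rfl⟩; exact norm_nonneg _⟩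
    (⟨x, mem_sphere_zero_iff_norm.2 hx⟩ : Metric.sphere (0 : EuclideanSpace ℝ (Fin n)) 1)

lemma sMin_mul_norm_le (A : Matrix (Fin m) (Fin n) ℝ) (x : EuclideanSpace ℝ (Fin n)) :
    sMin A * ‖x‖ ≤ ‖toEuclideanLin A x‖ := by
  rcases eq_or_ne x 0 with rfl | hx
  · simp
  have hx' : 0 < ‖x‖ := norm_pos_iff.2 hx
  have hu : ‖‖x‖⁻¹ • x‖ = 1 := by
    rw [norm_smul, norm_inv, norm_norm, inv_mul_cancel₀ hx'.ne']
  have h := sMin_le_norm_toEuclideanLin_apply A hu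
  rwa [map_smul, norm_smul, norm_inv, norm_norm, inv_mul_eq_div, le_div_iff₀ hx'] at h

lemma sMin_le_sNorm (A : Matrix (Fin m) (Fin n) ℝ) : sMin A ≤ sNorm A := by
  rcases isEmpty_or_nonempty (Metric.sphere (0 : EuclideanSpace ℝ (Fin n)) 1) with h | ⟨x, hx⟩
  · rw [sMin, Real.iInf_of_isEmpty]
    exact sNorm_nonneg A
  · rw [mem_sphere_zero_iff_norm] at hx
    simpa [hx] using (sMin_le_norm_toEuclideanLin_apply A hx).trans
      (norm_toEuclideanLin_apply_le_sNorm_mul A x)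

end SmallestSingularValue

lemma sMin_mul_sMin_sub_sNorm_mul_norm_le {n r k p : ℕ} {Q : Matrix (Fin n) (Fin r) ℝ}
    (hQ : Qᵀ * Q = 1) (S : Matrix (Fin r) (Fin k) ℝ) (W : Matrix (Fin k) (Fin p) ℝ)
    (E : Matrix (Fin n) (Fin p) ℝ) (x : EuclideanSpace ℝ (Fin p)) :
    (sMin S * sMin W - sNorm E) * ‖x‖ ≤ ‖toEuclideanLin (Q * S * W + E) x‖ := by
  have hSW : sMin S * sMin W * ‖x‖ ≤ ‖toEuclideanLin (Q * S * W) x‖ := by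
    rw [Matrix.mul_assoc, norm_toEuclideanLin_mul_apply_of_transpose_mul_self_eq_one hQ,
      toEuclideanLin_mul_apply, mul_assoc]
    exact (mul_le_mul_of_nonneg_left (sMin_mul_norm_le W x) (sMin_nonneg S)).trans
      (sMin_mul_norm_le S _)
  have hE := norm_toEuclideanLin_apply_le_sNorm_mul E x
  have hsum := norm_le_add_norm_add (toEuclideanLin (Q * S * W) x) (toEuclideanLin E x)
  rw [← LinearMap.add_apply, ← map_add] at hsum
  linarith

theorem stmt1_general {n r : ℕ}
    (Ustar : Matrix (Fin n) (Fin r) ℝ) (S W : Matrix (Fin r) (Fin r) ℝ)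
    (E : Matrix (Fin n) (Fin r) ℝ)
    (hUstar : Ustarᵀ * Ustar = 1)
    (Uhat : Matrix (Fin n) (Fin r) ℝ) (hUhat : Uhat = Ustar * S * W + E)
    (R : Matrix (Fin r) (Fin r) ℝ)
    (hRpsd : R.PosSemidef) (hR2 : R * R = Uhatᵀ * Uhat) (hRinv : IsUnit R.det)
    (U : Matrix (Fin n) (Fin r) ℝ) (hU : U = Uhat * R⁻¹)
    (κ : ℝ) (hκ : κ = sNorm S / sMin S)
    (hgap : κ * sNorm E < sMin S * sMin W) :
    sNorm ((1 - Ustar * Ustarᵀ) * U) ≤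
      κ * sNorm E / (sMin S * sMin W - κ * sNorm E) := by
  have hE := sNorm_nonneg E
  have hS : 0 < sMin S := by
    refine pos_of_mul_pos_left ?_ (sMin_nonneg W)
    have hκ0 : 0 ≤ κ := hκ ▸ div_nonneg (sNorm_nonneg S) (sMin_nonneg S)
    exact (mul_nonneg hκ0 hE).trans_lt hgap
  have hκ1 : 1 ≤ κ := hκ ▸ (one_le_div hS).2 (sMin_le_sNorm S)
  have hκE : sNorm E ≤ κ * sNorm E := le_mul_of_one_le_left hE hκ1
  have hgap' : 0 < sMin S * sMin W - sNorm E := by linarith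
  have hRt : Rᵀ * R = Uhatᵀ * Uhat := by
    rw [← conjTranspose_eq_transpose_of_trivial, hRpsd.isHermitian.eq, hR2]
  have hRinv_le : sNorm R⁻¹ ≤ (sMin S * sMin W - sNorm E)⁻¹ := by
    refine sNorm_inv_le_of_forall_mul_norm_le hRinv hgap' fun x => ?_
    rw [norm_toEuclideanLin_apply_eq_of_transpose_mul_self_eq hRt, hUhat]
    exact sMin_mul_sMin_sub_sNorm_mul_norm_le hUstar S W E x
  have hUproj : (1 - Ustar * Ustarᵀ) * U = (1 - Ustar * Ustarᵀ) * E * R⁻¹ := by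
    rw [hU, hUhat, ← Matrix.mul_assoc, Matrix.mul_add, Matrix.mul_assoc Ustar S W,
      one_sub_mul_transpose_mul_mul_eq_zero hUstar, zero_add]
  calc sNorm ((1 - Ustar * Ustarᵀ) * U)
      ≤ sNorm (1 - Ustar * Ustarᵀ) * sNorm E * sNorm R⁻¹ := by
        rw [hUproj]
        exact (sNorm_mul_le _ _).trans
          (mul_le_mul_of_nonneg_right (sNorm_mul_le _ _) (sNorm_nonneg _))
    _ ≤ 1 * sNorm E * (sMin S * sMin W - sNorm E)⁻¹ := by
        gcongr
        · exact sNorm_nonneg _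
        · exact sNorm_one_sub_mul_transpose_le_one hUstar
    _ ≤ κ * sNorm E / (sMin S * sMin W - κ * sNorm E) := by
        rw [one_mul, ← div_eq_mul_inv]
        exact div_le_div₀ (by positivity) hκE (by linarith) (by linarith)

theorem stmt1 {n r : ℕ}
    (Ustar : Matrix (Fin n) (Fin r) ℝ) (S W : Matrix (Fin r) (Fin r) ℝ)
    (E : Matrix (Fin n) (Fin r) ℝ)
    (hUstar : Ustarᵀ * Ustar = 1)
    (hdiag : S.IsDiag) (hSinv : IsUnit S.det)
    (Uhat : Matrix (Fin n) (Fin r) ℝ) (hUhat : Uhat = Ustar * S * W + E)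
    (R : Matrix (Fin r) (Fin r) ℝ)
    (hRpsd : R.PosSemidef) (hR2 : R * R = Uhatᵀ * Uhat) (hRinv : IsUnit R.det)
    (U : Matrix (Fin n) (Fin r) ℝ) (hU : U = Uhat * R⁻¹)
    (κ : ℝ) (hκ : κ = sNorm S / sMin S)
    (hgap : κ * sNorm E < sMin S * sMin W) :
    sNorm ((1 - Ustar * Ustarᵀ) * U) ≤
      κ * sNorm E / (sMin S * sMin W - κ * sNorm E) :=
  stmt1_general Ustar S W E hUstar Uhat hUhat R hRpsd hR2 hRinv U hU κ hκ hgap
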